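/- Let G be a finite nilpotent group with 2 ∤ |G| and 3 ∤ |G|. Then for every g ∈ G with g ≠ 1, ind((12),g) > 2·|G| and ind((123),g) > 3·|G|; and for every g ∈ G (including g = 1), ind((12)(34),g) > |G| and ind((1234),g) > 2·|G|. Here (12), (123), (1234), (12)(34) are the indicated elements of S₄. -/

import Mathlib

set_option maxRecDepth 20000
set_option linter.unnecessarySimpa false


/-- The setoid on `α` whose classes are the orbits (cycles) of the permutation `σ`. -/
def sameCycleSetoid {α : Type*} (σ : Equiv.Perm α) : Setoid α :=
  ⟨σ.SameCycle, ⟨fun _ => Equiv.Perm.SameCycle.refl σ _, fun h => h.symm, fun h1 h2 => h1.trans h2⟩⟩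

/-- The number of orbits of a permutation `σ` on `α`. -/
noncomputable def numOrbits {α : Type*} (σ : Equiv.Perm α) : ℕ :=
  Nat.card (Quotient (sameCycleSetoid σ))

/-- The index `ind(σ) = |α| - #orbits(σ)` of a permutation of a finite set. -/
noncomputable def permIndex {α : Type*} [Fintype α] (σ : Equiv.Perm α) : ℕ :=
  Fintype.card α - numOrbits σ

instance sameCycleQuotFintype {α : Type*} [Fintype α] [DecidableEq α] (σ : Equiv.Perm α) :
    Fintype (Quotient (sameCycleSetoid σ)) :=
  @Quotient.fintype α _ (sameCycleSetoid σ)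
    (fun x y => inferInstanceAs (Decidable (σ.SameCycle x y)))


lemma prodCongr_zpow {α β : Type*} (σ : Equiv.Perm α) (τ : Equiv.Perm β) (k : ℤ) :
    (σ.prodCongr τ) ^ k = (σ ^ k).prodCongr (τ ^ k) := by
  have hmul : ∀ (a c : Equiv.Perm α) (b d : Equiv.Perm β),
      (a.prodCongr b) * (c.prodCongr d) = (a * c).prodCongr (b * d) := by
    intro a c b d; ext ⟨x, y⟩ <;> rfl
  have hpow : ∀ n : ℕ, (σ.prodCongr τ) ^ n = (σ ^ n).prodCongr (τ ^ n) := by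
    intro n; induction n with
    | zero => ext ⟨x, y⟩ <;> rfl
    | succ n ih => rw [pow_succ, pow_succ, pow_succ, ih, hmul]
  have hinv : ∀ (a : Equiv.Perm α) (b : Equiv.Perm β),
      (a.prodCongr b)⁻¹ = (a⁻¹).prodCongr (b⁻¹) := by
    intro a b; ext ⟨x, y⟩ <;> rfl
  cases k with
  | ofNat n => simpa using hpow n
  | negSucc n => simp [zpow_negSucc, hpow, hinv]

lemma mulLeft_zpow' {G : Type*} [Group G] (g : G) (k : ℤ) (x : G) :
    ((Equiv.mulLeft g) ^ k) x = g ^ k * x := by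
  have hpow : ∀ (n : ℕ) (x : G), ((Equiv.mulLeft g) ^ n) x = g ^ n * x := by
    intro n; induction n with
    | zero => intro x; simp
    | succ n ih => intro x; rw [pow_succ, pow_succ]; simp [ih, mul_assoc]
  cases k with
  | ofNat n => simpa using hpow n x
  | negSucc n =>
    rw [zpow_negSucc, zpow_negSucc]
    have h2 := hpow (n+1) (((Equiv.mulLeft g ^ (n+1))⁻¹) x)
    rw [← Equiv.Perm.mul_apply, mul_inv_cancel, Equiv.Perm.one_apply] at h2
    have : (Equiv.mulLeft g ^ (n+1))⁻¹ x = (g ^ (n+1))⁻¹ * x := by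
      rw [eq_inv_mul_iff_mul_eq, ← h2]
    rw [this]

lemma key_le {α G : Type*} [Finite α] [Group G] [Finite G] (σ : Equiv.Perm α) (g : G)
    (h : Nat.Coprime (orderOf σ) (orderOf g)) :
    numOrbits (σ.prodCongr (Equiv.mulLeft g)) ≤
      numOrbits σ * (Subgroup.zpowers g).index := by
  classical
  set H := Subgroup.zpowers g
  let f : Quotient (sameCycleSetoid (σ.prodCongr (Equiv.mulLeft g))) →
      Quotient (sameCycleSetoid σ) × Quotient (QuotientGroup.rightRel H) :=
    Quotient.lift (fun p : α × G => (Quotient.mk _ p.1, Quotient.mk _ p.2)) (by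
      rintro ⟨i, x⟩ ⟨j, y⟩ ⟨k, hk⟩
      rw [prodCongr_zpow] at hk
      have h1 : (σ ^ k) i = j := congrArg Prod.fst hk
      have h2 : ((Equiv.mulLeft g ^ k)) x = y := congrArg Prod.snd hk
      rw [mulLeft_zpow'] at h2
      refine Prod.ext ?_ ?_ <;> simp only
      · exact Quotient.sound ⟨k, h1⟩
      · refine Quotient.sound (QuotientGroup.rightRel_apply.mpr ?_)
        exact ⟨k, by rw [← h2]; group⟩)
  have hinj : Function.Injective f := by
    rintro p q
    induction p using Quotient.inductionOn with | h p =>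
    induction q using Quotient.inductionOn with | h q =>
    obtain ⟨i, x⟩ := p; obtain ⟨j, y⟩ := q
    intro he
    have h1 : σ.SameCycle i j := Quotient.exact (congrArg Prod.fst he)
    have h2 : y * x⁻¹ ∈ H :=
      QuotientGroup.rightRel_apply.mp (Quotient.exact (congrArg Prod.snd he))
    obtain ⟨m, hm⟩ := h1
    obtain ⟨l, hl⟩ := Subgroup.mem_zpowers_iff.mp h2
    have hco : IsCoprime (orderOf σ : ℤ) (orderOf g : ℤ) := by
      rw [Int.isCoprime_iff_gcd_eq_one]; exact_mod_cast h
    obtain ⟨u, v, huv⟩ := hco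
    set k : ℤ := m + (orderOf σ : ℤ) * (u * (l - m)) with hkdef
    have hσ : σ ^ k = σ ^ m := by
      rw [hkdef, zpow_add, zpow_mul, zpow_natCast, pow_orderOf_eq_one, one_zpow, mul_one]
    have hk2 : k = l + (orderOf g : ℤ) * (-(v * (l - m))) := by
      have : k = m + (orderOf σ : ℤ) * (u * (l - m)) := hkdef
      linear_combination this + (l - m) * huv
    have hg : g ^ k = g ^ l := by
      rw [hk2, zpow_add, zpow_mul, zpow_natCast, pow_orderOf_eq_one, one_zpow, mul_one]
    refine Quotient.sound ⟨k, ?_⟩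
    rw [prodCongr_zpow]
    refine Prod.ext ?_ ?_
    · show (σ ^ k) i = j
      rw [hσ, hm]
    · show ((Equiv.mulLeft g) ^ k) x = y
      rw [mulLeft_zpow', hg, hl]; group
  calc numOrbits (σ.prodCongr (Equiv.mulLeft g))
      ≤ Nat.card (Quotient (sameCycleSetoid σ) × Quotient (QuotientGroup.rightRel H)) :=
        Nat.card_le_card_of_injective f hinj
    _ = numOrbits σ * H.index := by
        rw [Nat.card_prod, numOrbits]
        congr 1
        rw [Nat.card_congr (QuotientGroup.quotientRightRelEquivQuotientLeftRel H)]
        rfl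

lemma bound {G : Type*} [Group G] [Fintype G]
    (h2 : ¬ 2 ∣ Fintype.card G) (h3 : ¬ 3 ∣ Fintype.card G)
    (σ : Equiv.Perm (Fin 4)) (g : G) (hσ12 : σ ^ 12 = 1) :
    numOrbits (σ.prodCongr (Equiv.mulLeft g)) * orderOf g ≤ numOrbits σ * Fintype.card G := by
  have hdn : orderOf g ∣ Fintype.card G := orderOf_dvd_card
  have c2 : Nat.Coprime 2 (orderOf g) :=
    (Nat.Prime.coprime_iff_not_dvd Nat.prime_two).mpr fun hd => h2 (hd.trans hdn)
  have c3 : Nat.Coprime 3 (orderOf g) :=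
    (Nat.Prime.coprime_iff_not_dvd Nat.prime_three).mpr fun hd => h3 (hd.trans hdn)
  have c12 : Nat.Coprime 12 (orderOf g) := by
    have := (c2.mul c2).mul c3
    norm_num at this ⊢; exact this
  have hco : Nat.Coprime (orderOf σ) (orderOf g) :=
    Nat.Coprime.coprime_dvd_left (orderOf_dvd_of_pow_eq_one hσ12) c12
  have h1 := key_le σ g hco
  calc numOrbits (σ.prodCongr (Equiv.mulLeft g)) * orderOf g
      ≤ numOrbits σ * (Subgroup.zpowers g).index * orderOf g :=
        Nat.mul_le_mul_right _ h1
    _ = numOrbits σ * ((Subgroup.zpowers g).index * Nat.card (Subgroup.zpowers g)) := by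
        rw [Nat.card_zpowers]; ring
    _ = numOrbits σ * Fintype.card G := by
        rw [Subgroup.index_mul_card, Nat.card_eq_fintype_card]


/-- For a finite nilpotent group `G` with `2 ∤ |G|`, `3 ∤ |G|`: in `S₄ × G`,
`ind((12),g) > 2|G|` and `ind((123),g) > 3|G|` for `g ≠ 1`, while
`ind((12)(34),g) > |G|` and `ind((1234),g) > 2|G|` for all `g`. -/
theorem index_S4_prod (G : Type*) [Group G] [Fintype G] [Group.IsNilpotent G]
    (h2 : ¬ 2 ∣ Fintype.card G) (h3 : ¬ 3 ∣ Fintype.card G) :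
    (∀ g : G, g ≠ 1 →
      2 * Fintype.card G <
        permIndex ((Equiv.swap (0 : Fin 4) 1).prodCongr (Equiv.mulLeft g))) ∧
    (∀ g : G, g ≠ 1 →
      3 * Fintype.card G <
        permIndex ((Equiv.swap (0 : Fin 4) 2 * Equiv.swap 0 1).prodCongr (Equiv.mulLeft g))) ∧
    (∀ g : G,
      Fintype.card G <
        permIndex ((Equiv.swap (0 : Fin 4) 1 * Equiv.swap 2 3).prodCongr (Equiv.mulLeft g))) ∧
    (∀ g : G,
      2 * Fintype.card G <
        permIndex ((Equiv.swap (0 : Fin 4) 3 * Equiv.swap 0 2 * Equiv.swap 0 1).prodCongr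
          (Equiv.mulLeft g))) := by
  have hn : 0 < Fintype.card G := Fintype.card_pos
  set n := Fintype.card G with hndef
  have hcard : ∀ τ : Equiv.Perm (Fin 4 × G), permIndex τ = 4 * n - numOrbits τ := by
    intro τ; rw [permIndex, Fintype.card_prod, Fintype.card_fin]
  have hdn : ∀ g : G, orderOf g ∣ n := fun g => orderOf_dvd_card
  have hd5 : ∀ g : G, g ≠ 1 → 5 ≤ orderOf g := by
    intro g hg
    have h1 : orderOf g ≠ 1 := fun h => hg (orderOf_eq_one_iff.mp h)
    have hpos : 0 < orderOf g := orderOf_pos g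
    have hd2 : ¬ 2 ∣ orderOf g := fun hd => h2 (hd.trans (hdn g))
    have hd3 : ¬ 3 ∣ orderOf g := fun hd => h3 (hd.trans (hdn g))
    omega
  refine ⟨?_, ?_, ?_, ?_⟩
  · intro g hg
    have hb := bound h2 h3 (Equiv.swap (0 : Fin 4) 1) g (by decide)
    have hr : numOrbits (Equiv.swap (0 : Fin 4) 1) = 3 := by
      rw [numOrbits, Nat.card_eq_fintype_card]; decide
    rw [hr] at hb
    have h5 : 5 ≤ orderOf g := hd5 g hg
    have hNb : numOrbits ((Equiv.swap (0 : Fin 4) 1).prodCongr (Equiv.mulLeft g)) * 5 ≤ 3 * n :=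
      le_trans (Nat.mul_le_mul_left _ h5) hb
    rw [hcard]; omega
  · intro g hg
    have hb := bound h2 h3 (Equiv.swap (0 : Fin 4) 2 * Equiv.swap 0 1) g (by decide)
    have hr : numOrbits (Equiv.swap (0 : Fin 4) 2 * Equiv.swap 0 1) = 2 := by
      rw [numOrbits, Nat.card_eq_fintype_card]; decide
    rw [hr] at hb
    have h5 : 5 ≤ orderOf g := hd5 g hg
    have hNb : numOrbits ((Equiv.swap (0 : Fin 4) 2 * Equiv.swap 0 1).prodCongr (Equiv.mulLeft g)) * 5 ≤ 2 * n :=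
      le_trans (Nat.mul_le_mul_left _ h5) hb
    rw [hcard]; omega
  · intro g
    have hb := bound h2 h3 (Equiv.swap (0 : Fin 4) 1 * Equiv.swap 2 3) g (by decide)
    have hr : numOrbits (Equiv.swap (0 : Fin 4) 1 * Equiv.swap 2 3) = 2 := by
      rw [numOrbits, Nat.card_eq_fintype_card]; decide
    rw [hr] at hb
    have h5 : 1 ≤ orderOf g := orderOf_pos g
    have hNb : numOrbits ((Equiv.swap (0 : Fin 4) 1 * Equiv.swap 2 3).prodCongr (Equiv.mulLeft g)) * 1 ≤ 2 * n :=
      le_trans (Nat.mul_le_mul_left _ h5) hb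
    rw [hcard]; omega
  · intro g
    have hb := bound h2 h3 (Equiv.swap (0 : Fin 4) 3 * Equiv.swap 0 2 * Equiv.swap 0 1) g (by decide)
    have hr : numOrbits (Equiv.swap (0 : Fin 4) 3 * Equiv.swap 0 2 * Equiv.swap 0 1) = 1 := by
      rw [numOrbits, Nat.card_eq_fintype_card]; decide
    rw [hr] at hb
    have h5 : 1 ≤ orderOf g := orderOf_pos g
    have hNb : numOrbits ((Equiv.swap (0 : Fin 4) 3 * Equiv.swap 0 2 * Equiv.swap 0 1).prodCongr (Equiv.mulLeft g)) * 1 ≤ 1 * n :=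
      le_trans (Nat.mul_le_mul_left _ h5) hb
    rw [hcard]; omega
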